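/- Every tournament on n vertices has monitoring arc-geodetic number at least n − 1. -/

import Mathlib

/-!
Suppose an arc `u → v` of a tournament has both ends outside a monitoring set `M`. It lies on
every shortest path from some `w₀ ∈ M` to another vertex of `M`, which forces `v → w₀`. The arc
`v → w₀` is in turn monitored from some `w₁ ∈ M`; every shortest `w₁`–`w₀` path then ends with
`u, v, w₀`, so `u → v` lies on every shortest path from `w₁` to `w₀`, and `w₀ → w₁`. Iterating
yields monitors `w₀, w₁, w₂, …` in which each `wᵢ` beats every later `wⱼ`: otherwise
`wᵢ₊₁ → wⱼ → wᵢ` would be a path of length at most two, too short to pass through `u → v`.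
A finite tournament has no such infinite sequence, so `M` misses at most one vertex.
-/

namespace MAG

variable {V : Type*}

/-- Directed walk from `x` to `y` whose list of visited vertices is `l`. -/
inductive DWalk (A : V → V → Prop) : V → V → List V → Prop
  | nil (v : V) : DWalk A v v [v]
  | cons {u v w : V} {l : List V} (h : A u v) (p : DWalk A v w l) :
      DWalk A u w (u :: l)

/-- The arc `(a, b)` lies on the walk with vertex list `l`. -/
def ArcOn (a b : V) (l : List V) : Prop :=
  ∃ l₁ l₂ : List V, l = l₁ ++ a :: b :: l₂

/-- `l` is (the vertex list of) a shortest directed walk from `x` to `y`. -/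
def IsShortest (A : V → V → Prop) (x y : V) (l : List V) : Prop :=
  DWalk A x y l ∧ ∀ l' : List V, DWalk A x y l' → l.length ≤ l'.length

/-- `x` and `y` monitor the arc `(a, b)`: the arc lies on every shortest
directed path from `x` to `y` (and such a path exists), or symmetrically
from `y` to `x`. -/
def Monitors (A : V → V → Prop) (x y a b : V) : Prop :=
  ((∃ l, IsShortest A x y l) ∧ ∀ l, IsShortest A x y l → ArcOn a b l) ∨
  ((∃ l, IsShortest A y x l) ∧ ∀ l, IsShortest A y x l → ArcOn a b l)

/-- A monitoring arc-geodetic set of the digraph `A`. -/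
def IsMAGSet (A : V → V → Prop) (M : Set V) : Prop :=
  ∀ a b : V, A a b → ∃ x ∈ M, ∃ y ∈ M, x ≠ y ∧ Monitors A x y a b

/-- The monitoring arc-geodetic number of the digraph `A`. -/
noncomputable def mag (A : V → V → Prop) [Fintype V] : ℕ :=
  sInf {n | ∃ M : Finset V, IsMAGSet A (M : Set V) ∧ M.card = n}

/-- `A` is an orientation of the undirected simple graph `G`. -/
structure IsOrientation (G : SimpleGraph V) (A : V → V → Prop) : Prop where
  adj_iff : ∀ u v : V, G.Adj u v ↔ (A u v ∨ A v u)
  asymm : ∀ u v : V, A u v → ¬ A v u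

/-- The lower monitoring arc-geodetic number of `G`. -/
noncomputable def magMinus (G : SimpleGraph V) [Fintype V] : ℕ :=
  sInf {n | ∃ A : V → V → Prop, IsOrientation G A ∧ mag A = n}

/-- The upper monitoring arc-geodetic number of `G`. -/
noncomputable def magPlus (G : SimpleGraph V) [Fintype V] : ℕ :=
  sSup {n | ∃ A : V → V → Prop, IsOrientation G A ∧ mag A = n}

/-- A source: a vertex with no in-neighbours. -/
def IsSource (A : V → V → Prop) (v : V) : Prop := ∀ w, ¬ A w v

/-- A sink: a vertex with no out-neighbours. -/
def IsSink (A : V → V → Prop) (v : V) : Prop := ∀ w, ¬ A v w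

/-- An oriented graph: no loops and no pair of opposite arcs. -/
def IsOrientedGraph (A : V → V → Prop) : Prop :=
  (∀ v, ¬ A v v) ∧ ∀ u v : V, A u v → ¬ A v u

/-- The underlying undirected graph of `A` is connected. -/
def IsConnectedDigraph (A : V → V → Prop) : Prop :=
  ∀ x y : V, Relation.ReflTransGen (fun a b => A a b ∨ A b a) x y

namespace DWalk

variable {A : V → V → Prop} {x y z : V} {s t l m : List V}

theorem exists_eq_cons (h : DWalk A x y l) : ∃ t, l = x :: t := by
  cases h <;> exact ⟨_, rfl⟩

theorem exists_eq_concat (h : DWalk A x y l) : ∃ s, l = s ++ [y] := by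
  induction h with
  | nil v => exact ⟨[], rfl⟩
  | cons _ _ ih =>
    obtain ⟨s, rfl⟩ := ih
    exact ⟨_ :: s, rfl⟩

theorem eq_of_singleton (h : DWalk A x y [z]) : x = y := by
  cases h with
  | nil => rfl
  | cons _ p => cases p

theorem head_eq (h : DWalk A x y (z :: t)) : z = x := by
  obtain ⟨_, h'⟩ := h.exists_eq_cons
  exact (List.cons.inj h').1

theorem exists_tail (h : DWalk A x y (z :: t)) (ht : t ≠ []) : ∃ w, A x w ∧ DWalk A w y t := by
  cases h with
  | nil => exact absurd rfl ht
  | cons hA p => exact ⟨_, hA, p⟩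

theorem adj_of_cons_cons (h : DWalk A x y (z :: z' :: t)) : A x z' := by
  obtain ⟨_, hA, p⟩ := h.exists_tail (List.cons_ne_nil _ _)
  exact p.head_eq ▸ hA

theorem dropUntil (h : DWalk A x y (s ++ z :: t)) : DWalk A z y (z :: t) := by
  induction s generalizing x with
  | nil => exact h.head_eq ▸ h
  | cons a s ih =>
    obtain ⟨_, -, p⟩ := h.exists_tail (by simp)
    exact ih p

theorem takeUntil (h : DWalk A x y (s ++ z :: t)) : DWalk A x z (s ++ [z]) := by
  induction s generalizing x with
  | nil => exact h.head_eq ▸ nil z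
  | cons a s ih =>
    obtain ⟨_, hA, p⟩ := h.exists_tail (by simp)
    obtain rfl := h.head_eq
    exact cons hA (ih p)

theorem append (h : DWalk A x y l) (h' : DWalk A y z (y :: m)) : DWalk A x z (l ++ m) := by
  induction h with
  | nil => exact h'
  | cons hA _ ih => exact cons hA (ih h')

theorem length_pos_prefix (h : DWalk A x y (s ++ z :: t)) (hxz : x ≠ z) : 0 < s.length := by
  cases s with
  | nil => exact absurd h.head_eq hxz.symm
  | cons => simp

theorem length_pos_suffix (h : DWalk A x y (s ++ z :: t)) (hzy : z ≠ y) : 0 < t.length := by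
  cases t with
  | nil => exact absurd h.dropUntil.eq_of_singleton hzy
  | cons => simp

theorem two_le_length (h : DWalk A x y l) (hxy : x ≠ y) : 2 ≤ l.length := by
  obtain ⟨_ | ⟨z, t⟩, rfl⟩ := h.exists_eq_cons
  · exact absurd h.eq_of_singleton hxy
  · simp

theorem exists_shorter_of_not_nodup (h : DWalk A x y l) (hl : ¬ l.Nodup) :
    ∃ l', DWalk A x y l' ∧ l'.length < l.length := by
  induction h with
  | nil v => simp at hl
  | @cons a _ _ L hA p ih =>
    by_cases ha : a ∈ L
    · obtain ⟨s, t, rfl⟩ := List.append_of_mem ha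
      exact ⟨a :: t, p.dropUntil, by simp⟩
    · obtain ⟨l', hw, hlen⟩ := ih (by simpa [ha] using hl)
      exact ⟨a :: l', cons hA hw, by simpa using hlen⟩

theorem exists_isShortest (h : DWalk A x y l) : ∃ l', IsShortest A x y l' := by
  obtain ⟨l', hl', hmin⟩ := (measure List.length).wf.has_min {l | DWalk A x y l} ⟨l, h⟩
  exact ⟨l', hl', fun m hm => not_lt.1 (hmin m hm)⟩

end DWalk

namespace IsShortest

variable {A : V → V → Prop} {x y : V} {l l' : List V}

theorem nodup (h : IsShortest A x y l) : l.Nodup := by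
  by_contra hl
  obtain ⟨l', hw, hlen⟩ := h.1.exists_shorter_of_not_nodup hl
  exact (h.2 l' hw).not_gt hlen

theorem of_length_le (h : IsShortest A x y l) (h' : DWalk A x y l') (hle : l'.length ≤ l.length) :
    IsShortest A x y l' :=
  ⟨h', fun m hm => hle.trans (h.2 m hm)⟩

end IsShortest

theorem ArcOn.exists_eq_concat_of_nodup {a b : V} {s t : List V} (hl : (s ++ b :: t).Nodup)
    (h : ArcOn a b (s ++ b :: t)) : ∃ s', s = s' ++ [a] := by
  obtain ⟨l₁, l₂, he⟩ := h
  have hb : b ∉ s ∧ b ∉ t := by simpa using (List.nodup_middle.1 hl).notMem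
  rw [List.append_cons l₁] at he
  exact ⟨l₁, ((List.append_cons_inj_of_notMem hb.1 hb.2).1 he).1⟩

def MonitorsFrom (A : V → V → Prop) (x y a b : V) : Prop :=
  (∃ l, IsShortest A x y l) ∧ ∀ l, IsShortest A x y l → ArcOn a b l

namespace MonitorsFrom

variable {A : V → V → Prop} {a b c e u v w x y q : V} {L l : List V}

theorem exists_isShortest_split (h : MonitorsFrom A x y a b) :
    ∃ l₁ l₂, IsShortest A x y (l₁ ++ a :: b :: l₂) := by
  obtain ⟨⟨l, hl⟩, hall⟩ := h
  obtain ⟨l₁, l₂, rfl⟩ := hall l hl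
  exact ⟨l₁, l₂, hl⟩

theorem head_adj_source (htot : ∀ u v : V, u ≠ v → A u v ∨ A v u)
    (h : MonitorsFrom A x y a b) (hxa : x ≠ a) : A b x := by
  obtain ⟨l₁, l₂, hl⟩ := h.exists_isShortest_split
  have h₁ := hl.1.length_pos_prefix hxa
  have hb : DWalk A b y (b :: l₂) := (List.append_cons l₁ a _ ▸ hl.1).dropUntil
  have hbx : b ≠ x := by
    rintro rfl
    have := hl.2 _ hb
    simp only [List.length_append, List.length_cons] at this
    omega
  refine (htot b x hbx).resolve_right fun hxb => ?_
  have := hl.2 _ (.cons hxb hb)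
  simp only [List.length_append, List.length_cons] at this
  omega

theorem four_le_length (h : MonitorsFrom A x y a b) (hxa : x ≠ a) (hyb : y ≠ b)
    (hl : DWalk A x y l) : 4 ≤ l.length := by
  obtain ⟨l₁, l₂, hs⟩ := h.exists_isShortest_split
  have h₁ := hs.1.length_pos_prefix hxa
  have h₂ := (List.append_cons l₁ a _ ▸ hs.1).length_pos_suffix hyb.symm
  have := hs.2 l hl
  simp only [List.length_append, List.length_cons] at this
  omega

theorem exists_isShortest_to_head (h : MonitorsFrom A x y a b) : ∃ L, IsShortest A x b L := by
  obtain ⟨l₁, l₂, hl⟩ := h.exists_isShortest_split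
  exact (List.append_cons l₁ a _ ▸ hl.1).takeUntil.exists_isShortest

theorem eq_append_of_isShortest_to_head (h : MonitorsFrom A x y a b) (hL : IsShortest A x b L) :
    ∃ L₀, L = L₀ ++ [a, b] := by
  obtain ⟨l₁, l₂, hl⟩ := h.exists_isShortest_split
  rw [List.append_cons l₁ a] at hl
  have hK : IsShortest A x y (L ++ l₂) := by
    refine hl.of_length_le (hL.1.append hl.1.dropUntil) ?_
    have := hL.2 _ hl.1.takeUntil
    simp only [List.length_append, List.length_cons, List.length_nil] at this ⊢
    omega
  obtain ⟨L', rfl⟩ := hL.1.exists_eq_concat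
  rw [List.append_assoc, List.singleton_append] at hK
  obtain ⟨L₀, rfl⟩ := ArcOn.exists_eq_concat_of_nodup hK.nodup (h.2 _ hK)
  exact ⟨L₀, by simp⟩

theorem eq_of_isShortest_concat (hasym : ∀ u v : V, A u v → ¬ A v u)
    (htot : ∀ u v : V, u ≠ v → A u v ∨ A v u) (h : MonitorsFrom A w y u v) (hwu : w ≠ u)
    (hL : IsShortest A c w (L ++ [q, v, w])) : q = u := by
  by_contra hqu
  have hqv : A q v := hL.1.dropUntil.adj_of_cons_cons
  have hvw : A v w := (List.append_cons L q _ ▸ hL.1).dropUntil.adj_of_cons_cons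
  have hwq : A w q := by
    refine (htot w q ?_).resolve_right fun hqw => ?_
    · rintro rfl
      exact hasym _ _ hvw hqv
    · have := hL.2 _ (hL.1.takeUntil.append (.cons hqw (.nil w)))
      simp only [List.length_append, List.length_cons, List.length_nil] at this
      omega
  -- `w → q → v` plus the tail of a shortest `w`–`y` path is again shortest but enters `v` from `q`.
  obtain ⟨m₁, m₂, hm⟩ := h.exists_isShortest_split
  have h₁ := hm.1.length_pos_prefix hwu
  have hN : IsShortest A w y ([w, q] ++ v :: m₂) := by
    refine hm.of_length_le (.cons hwq (.cons hqv (List.append_cons m₁ u _ ▸ hm.1).dropUntil)) ?_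
    simp only [List.length_append, List.length_cons, List.length_nil]
    omega
  obtain ⟨s, hs⟩ := ArcOn.exists_eq_concat_of_nodup hN.nodup (h.2 _ hN)
  exact hqu (by simpa using congrArg List.getLast? hs)

theorem of_monitorsFrom_arc_to_source (hasym : ∀ u v : V, A u v → ¬ A v u)
    (htot : ∀ u v : V, u ≠ v → A u v ∨ A v u) (hw : MonitorsFrom A w y u v) (hwu : w ≠ u)
    (hc : MonitorsFrom A c e v w) (hcv : c ≠ v) : MonitorsFrom A c w u v := by
  refine ⟨hc.exists_isShortest_to_head, fun L hL => ?_⟩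
  obtain ⟨L₀, rfl⟩ := hc.eq_append_of_isShortest_to_head hL
  obtain rfl | ⟨L₁, q, rfl⟩ := L₀.eq_nil_or_concat'
  · exact absurd hL.1.head_eq hcv.symm
  obtain rfl := hw.eq_of_isShortest_concat hasym htot hwu (by simpa using hL)
  exact ⟨L₁, [w], by simp⟩

end MonitorsFrom

/-- `c` is the successor of `w` in the chain of monitors `w₀, w₁, …` of the arc `(u, v)`. -/
def NextMonitor (A : V → V → Prop) (u v c w : V) : Prop :=
  c ≠ u ∧ w ≠ v ∧ MonitorsFrom A c w u v ∧ A w c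

theorem NextMonitor.adj_of_transGen {A : V → V → Prop} {u v c w : V}
    (htot : ∀ u v : V, u ≠ v → A u v ∨ A v u)
    (h : Relation.TransGen (NextMonitor A u v) c w) : A w c := by
  induction h using Relation.TransGen.head_induction_on with
  | single h => exact h.2.2.2
  | @head c b hcb _ hwb =>
    obtain ⟨hcu, hbv, hmon, -⟩ := hcb
    by_contra hwc
    rcases eq_or_ne c w with rfl | hcw
    · have := hmon.four_le_length hcu hbv (.cons hwb (.nil b))
      simp at this
    · have hcw' := (htot c w hcw).resolve_right hwc
      have := hmon.four_le_length hcu hbv (.cons hcw' (.cons hwb (.nil b)))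
      simp at this

theorem IsMAGSet.exists_nextMonitor {A : V → V → Prop} {M : Set V} {u v w y : V}
    (hasym : ∀ u v : V, A u v → ¬ A v u) (htot : ∀ u v : V, u ≠ v → A u v ∨ A v u)
    (hM : IsMAGSet A M) (hu : u ∉ M) (hv : v ∉ M) (hw : w ∈ M) (hwy : MonitorsFrom A w y u v) :
    ∃ c ∈ M, NextMonitor A u v c w := by
  have hwu : w ≠ u := ne_of_mem_of_not_mem hw hu
  have next : ∀ c ∈ M, ∀ e, MonitorsFrom A c e v w → NextMonitor A u v c w := fun c hc e hce =>
    ⟨ne_of_mem_of_not_mem hc hu, ne_of_mem_of_not_mem hw hv,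
      hwy.of_monitorsFrom_arc_to_source hasym htot hwu hce (ne_of_mem_of_not_mem hc hv),
      hce.head_adj_source htot (ne_of_mem_of_not_mem hc hv)⟩
  obtain ⟨x, hx, y, hy, -, hxy | hyx⟩ := hM v w (hwy.head_adj_source htot hwu)
  exacts [⟨x, hx, next x hx y hxy⟩, ⟨y, hy, next y hy x hyx⟩]

theorem IsMAGSet.mem_or_mem_of_adj [Finite V] {A : V → V → Prop} {M : Set V} {u v : V}
    (hasym : ∀ u v : V, A u v → ¬ A v u) (htot : ∀ u v : V, u ≠ v → A u v ∨ A v u)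
    (hM : IsMAGSet A M) (huv : A u v) : u ∈ M ∨ v ∈ M := by
  by_contra! ⟨hu, hv⟩
  let S := {w | w ∈ M ∧ ∃ y, MonitorsFrom A w y u v}
  have hS : S.Nonempty := by
    obtain ⟨x, hx, y, hy, -, hxy | hyx⟩ := hM u v huv
    exacts [⟨x, hx, y, hxy⟩, ⟨y, hy, x, hyx⟩]
  have : Std.Irrefl (Relation.TransGen (NextMonitor A u v)) :=
    ⟨fun w h => have hww := NextMonitor.adj_of_transGen htot h; hasym w w hww hww⟩
  obtain ⟨w, ⟨hwM, y, hwy⟩, hmin⟩ :=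
    (Finite.wellFounded_of_trans_of_irrefl (Relation.TransGen (NextMonitor A u v))).has_min S hS
  obtain ⟨c, hcM, hcw⟩ := hM.exists_nextMonitor hasym htot hu hv hwM hwy
  exact hmin c ⟨hcM, w, hcw.2.2.1⟩ (.single hcw)

theorem isMAGSet_univ {A : V → V → Prop} (hirr : ∀ v, ¬ A v v) : IsMAGSet A Set.univ := by
  intro a b hab
  have hab' : a ≠ b := fun h => hirr a (h ▸ hab)
  have hwalk : DWalk A a b [a, b] := .cons hab (.nil b)
  refine ⟨a, trivial, b, trivial, hab',
    .inl ⟨⟨[a, b], hwalk, fun l hl => hl.two_le_length hab'⟩, fun l hl => ?_⟩⟩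
  obtain ⟨t, rfl⟩ := hl.1.exists_eq_cons
  obtain ⟨s, hs⟩ := hl.1.exists_eq_concat
  have h₁ := hl.2 _ hwalk
  have h₂ := hl.1.two_le_length hab'
  obtain ⟨z, rfl⟩ : ∃ z, t = [z] := List.length_eq_one_iff.1 <| by
    simp only [List.length_cons, List.length_nil] at h₁ h₂
    omega
  obtain rfl : z = b := by simpa using congrArg List.getLast? hs
  exact ⟨[], [], rfl⟩

theorem tournament_mag_ge_general {V : Type*} [Fintype V] (A : V → V → Prop)
    (hasym : ∀ u v : V, A u v → ¬ A v u)
    (htot : ∀ u v : V, u ≠ v → A u v ∨ A v u) :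
    Fintype.card V - 1 ≤ mag A := by
  classical
  refine le_csInf ⟨_, Finset.univ, by simpa using isMAGSet_univ fun v h => hasym v v h h, rfl⟩ ?_
  rintro _ ⟨M, hM, rfl⟩
  have hcompl : Mᶜ.card ≤ 1 := Finset.card_le_one.2 fun u hu v hv => by
    by_contra huv
    simp only [Finset.mem_compl] at hu hv
    rcases htot u v huv with h | h
    · exact (hM.mem_or_mem_of_adj hasym htot h).elim hu hv
    · exact (hM.mem_or_mem_of_adj hasym htot h).elim hv hu
  rw [Finset.card_compl] at hcompl
  omega

/-- every tournament on `n` vertices has monitoring arc-geodetic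
number at least `n - 1`. -/
theorem tournament_mag_ge {V : Type*} [Fintype V] (A : V → V → Prop)
    (hirr : ∀ v, ¬ A v v) (hasym : ∀ u v : V, A u v → ¬ A v u)
    (htot : ∀ u v : V, u ≠ v → A u v ∨ A v u) :
    Fintype.card V - 1 ≤ mag A :=
  tournament_mag_ge_general A hasym htot

end MAG
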